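/- arXiv:2010.06058 — 5 statements merged into one kernel-verified Lean document; each statement's English description precedes it below -/
import Mathlib

section
/- Let c, h ≥ 0, a ∈ ℝ, and let μ₂ be a real zero of χ_κ(z) = z² − cz − 1 + a e^{−zch}. Define the operators (Dy)(t) = y''(t) − cy'(t) − y(t) + a y(t−ch), (D₁y)(t) = y'(t) − μ₂ y(t), and (D₂y)(t) = y'(t) − (c−μ₂)y(t) − a e^{−chμ₂} ∫_{−ch}^{0} e^{−μ₂ s} y(t+s) ds. Then D₁ and D₂ commute and Dy = D₁D₂y = D₂D₁y for every y ∈ C²(ℝ,ℝ). -/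
/-!
Let `K y (t) = ∫_{-ch}^0 e^{-μ₂ s} y(t+s) ds` (`expWindowIntegral μ₂ (c * h)`), so that
`D₂ = d/dt - (c - μ₂) - a e^{-chμ₂} K`. Since `K y (t) = e^{μ₂ t} ∫_{t-ch}^t e^{-μ₂ x} y(x) dx`,
the fundamental theorem of calculus gives `D₁ (K y) = y - e^{μ₂ ch} y(· - ch)`; and since
`e^{-μ₂ s} (D₁ y)(t+s)` is the `s`-derivative of `e^{-μ₂ s} y(t+s)`, also
`K (D₁ y) = y - e^{μ₂ ch} y(· - ch)`. Hence `D₁ D₂ y` and `D₂ D₁ y` both equal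
`D₁ y' - (c - μ₂) D₁ y - a e^{-chμ₂} (y - e^{μ₂ ch} y(· - ch))`,
which expands to `D y` precisely because `χ_κ(μ₂) = 0`.
-/

open Filter Set intervalIntegral

noncomputable section

/-- The second-order delayed differential operator
`(Dy)(t) = y''(t) - cy'(t) - y(t) + a y(t-ch)`. -/
def Dop (c h a : ℝ) (y : ℝ → ℝ) (t : ℝ) : ℝ :=
  deriv (deriv y) t - c * deriv y t - y t + a * y (t - c * h)

/-- The first-order factor `(D₁y)(t) = y'(t) - μ₂ y(t)`. -/
def D1op (μ₂ : ℝ) (y : ℝ → ℝ) (t : ℝ) : ℝ :=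
  deriv y t - μ₂ * y t

/-- The integro-differential factor
`(D₂y)(t) = y'(t) - (c-μ₂)y(t) - a e^{-chμ₂} ∫_{-ch}^0 e^{-μ₂ s} y(t+s) ds`. -/
def D2op (c h a μ₂ : ℝ) (y : ℝ → ℝ) (t : ℝ) : ℝ :=
  deriv y t - (c - μ₂) * y t -
    a * Real.exp (-(c * h * μ₂)) * ∫ s in (-(c * h))..(0 : ℝ), Real.exp (-(μ₂ * s)) * y (t + s)

def expWindowIntegral (μ r : ℝ) (y : ℝ → ℝ) (t : ℝ) : ℝ :=
  ∫ s in (-r)..0, Real.exp (-(μ * s)) * y (t + s)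

theorem Continuous.hasDerivAt_integral_sub_const_left {g : ℝ → ℝ} (hg : Continuous g)
    (r t : ℝ) : HasDerivAt (fun u => ∫ x in (u - r)..u, g x) (g t - g (t - r)) t := by
  have hprim : ∀ u, HasDerivAt (fun v => ∫ x in (0 : ℝ)..v, g x) (g u) u :=
    fun u => (hg.integral_hasStrictDerivAt 0 u).hasDerivAt
  have hsplit : (fun u => ∫ x in (u - r)..u, g x) =
      fun u => (∫ x in (0 : ℝ)..u, g x) - ∫ x in (0 : ℝ)..(u - r), g x := by
    funext u
    rw [integral_interval_sub_left (hg.intervalIntegrable _ _) (hg.intervalIntegrable _ _)]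
  rw [hsplit]
  exact (hprim t).sub ((hprim (t - r)).comp_sub_const t r)

section ExpWindow

variable (μ r : ℝ)

theorem expWindowIntegral_eq (y : ℝ → ℝ) (t : ℝ) :
    expWindowIntegral μ r y t =
      Real.exp (μ * t) * ∫ x in (t - r)..t, Real.exp (-(μ * x)) * y x := by
  have hshift : ∀ s, Real.exp (-(μ * s)) * y (t + s) =
      Real.exp (μ * t) * (Real.exp (-(μ * (t + s))) * y (t + s)) := by
    intro s
    rw [← mul_assoc, ← Real.exp_add]
    ring_nf
  rw [← integral_const_mul, expWindowIntegral, integral_congr fun s _ => hshift s,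
    integral_comp_add_left (fun x => Real.exp (μ * t) * (Real.exp (-(μ * x)) * y x)) t,
    add_zero, ← sub_eq_add_neg]

theorem hasDerivAt_expWindowIntegral {y : ℝ → ℝ} (hy : Continuous y) (t : ℝ) :
    HasDerivAt (expWindowIntegral μ r y)
      (μ * expWindowIntegral μ r y t + y t - Real.exp (μ * r) * y (t - r)) t := by
  set g : ℝ → ℝ := fun x => Real.exp (-(μ * x)) * y x
  have hexp : HasDerivAt (fun u => Real.exp (μ * u)) (Real.exp (μ * t) * μ) t := by
    simpa using ((hasDerivAt_id t).const_mul μ).exp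
  have hderiv := hexp.mul ((show Continuous g by fun_prop).hasDerivAt_integral_sub_const_left r t)
  refine (hderiv.congr_of_eventuallyEq (.of_forall (expWindowIntegral_eq μ r y))).congr_deriv ?_
  have hcancel : Real.exp (μ * t) * Real.exp (-(μ * t)) = 1 := by
    rw [← Real.exp_add, add_neg_cancel, Real.exp_zero]
  have hdelay : Real.exp (μ * t) * Real.exp (-(μ * (t - r))) = Real.exp (μ * r) := by
    rw [← Real.exp_add]; ring_nf
  rw [expWindowIntegral_eq]
  linear_combination y t * hcancel - y (t - r) * hdelay

theorem expWindowIntegral_D1op {y : ℝ → ℝ} (hy : ContDiff ℝ 1 y) (t : ℝ) :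
    expWindowIntegral μ r (D1op μ y) t = y t - Real.exp (μ * r) * y (t - r) := by
  have hprod : ∀ s, HasDerivAt (fun s => Real.exp (-(μ * s)) * y (t + s))
      (Real.exp (-(μ * s)) * D1op μ y (t + s)) s := by
    intro s
    have hexp : HasDerivAt (fun s => Real.exp (-(μ * s))) (Real.exp (-(μ * s)) * -μ) s := by
      simpa using ((hasDerivAt_id s).const_mul μ).neg.exp
    have hshift := ((hy.differentiable one_ne_zero) (t + s)).hasDerivAt.comp_const_add t s
    refine (hexp.mul hshift).congr_deriv ?_
    rw [D1op]
    ring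
  have hD1 : Continuous (D1op μ y) :=
    (hy.continuous_deriv le_rfl).sub (continuous_const.mul hy.continuous)
  have hint : Continuous fun s => Real.exp (-(μ * s)) * D1op μ y (t + s) := by fun_prop
  rw [expWindowIntegral,
    integral_eq_sub_of_hasDerivAt (fun s _ => hprod s) (hint.intervalIntegrable _ _)]
  simp [sub_eq_add_neg]

end ExpWindow

section Factorization

variable (c h a μ : ℝ)

theorem hasDerivAt_D1op {y : ℝ → ℝ} (hy : ContDiff ℝ 2 y) (t : ℝ) :
    HasDerivAt (D1op μ y) (D1op μ (deriv y) t) t :=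
  ((hy.deriv' (n := 1)).differentiable one_ne_zero t).hasDerivAt.sub
    (((hy.differentiable two_ne_zero) t).hasDerivAt.const_mul μ)

theorem D2op_apply (y : ℝ → ℝ) (t : ℝ) :
    D2op c h a μ y t =
      deriv y t - (c - μ) * y t - a * Real.exp (-(c * h * μ)) * expWindowIntegral μ (c * h) y t :=
  rfl

theorem D1op_D2op {y : ℝ → ℝ} (hy : ContDiff ℝ 2 y) (t : ℝ) :
    D1op μ (D2op c h a μ y) t =
      D1op μ (deriv y) t - (c - μ) * D1op μ y t -
        a * Real.exp (-(c * h * μ)) * (y t - Real.exp (μ * (c * h)) * y (t - c * h)) := by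
  have hy1 := hy.differentiable two_ne_zero
  have hD2 : HasDerivAt (D2op c h a μ y)
      (deriv (deriv y) t - (c - μ) * deriv y t - a * Real.exp (-(c * h * μ)) *
        (μ * expWindowIntegral μ (c * h) y t + y t - Real.exp (μ * (c * h)) * y (t - c * h))) t :=
    (((hy.deriv' (n := 1)).differentiable one_ne_zero t).hasDerivAt.sub
      ((hy1 t).hasDerivAt.const_mul (c - μ))).sub
      ((hasDerivAt_expWindowIntegral μ (c * h) hy1.continuous t).const_mul
        (a * Real.exp (-(c * h * μ))))
  rw [D1op, hD2.deriv, D2op_apply]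
  simp only [D1op]
  ring

theorem D2op_D1op {y : ℝ → ℝ} (hy : ContDiff ℝ 2 y) (t : ℝ) :
    D2op c h a μ (D1op μ y) t =
      D1op μ (deriv y) t - (c - μ) * D1op μ y t -
        a * Real.exp (-(c * h * μ)) * (y t - Real.exp (μ * (c * h)) * y (t - c * h)) := by
  rw [D2op_apply, (hasDerivAt_D1op μ hy t).deriv,
    expWindowIntegral_D1op μ (c * h) (hy.of_le one_le_two)]

theorem Dop_eq_of_charRoot (hμ : μ ^ 2 - c * μ - 1 + a * Real.exp (-(μ * c * h)) = 0)
    (y : ℝ → ℝ) (t : ℝ) :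
    Dop c h a y t =
      D1op μ (deriv y) t - (c - μ) * D1op μ y t -
        a * Real.exp (-(c * h * μ)) * (y t - Real.exp (μ * (c * h)) * y (t - c * h)) := by
  have hcancel : Real.exp (-(c * h * μ)) * Real.exp (μ * (c * h)) = 1 := by
    rw [← Real.exp_add]; ring_nf; exact Real.exp_zero
  rw [show -(μ * c * h) = -(c * h * μ) by ring] at hμ
  simp only [Dop, D1op]
  linear_combination y t * hμ - a * y (t - c * h) * hcancel

end Factorization

theorem operators_factorize_commute_general
    (c h a μ₂ : ℝ)
    (hμ₂ : μ₂ ^ 2 - c * μ₂ - 1 + a * Real.exp (-(μ₂ * c * h)) = 0)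
    (y : ℝ → ℝ) (hy : ContDiff ℝ 2 y) :
    (∀ t : ℝ, D1op μ₂ (D2op c h a μ₂ y) t = Dop c h a y t) ∧
    (∀ t : ℝ, D2op c h a μ₂ (D1op μ₂ y) t = Dop c h a y t) ∧
    (∀ t : ℝ, D1op μ₂ (D2op c h a μ₂ y) t = D2op c h a μ₂ (D1op μ₂ y) t) := by
  have hD1D2 : ∀ t, D1op μ₂ (D2op c h a μ₂ y) t = Dop c h a y t := fun t => by
    rw [D1op_D2op c h a μ₂ hy, Dop_eq_of_charRoot c h a μ₂ hμ₂]
  have hD2D1 : ∀ t, D2op c h a μ₂ (D1op μ₂ y) t = Dop c h a y t := fun t => by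
    rw [D2op_D1op c h a μ₂ hy, Dop_eq_of_charRoot c h a μ₂ hμ₂]
  exact ⟨hD1D2, hD2D1, fun t => (hD1D2 t).trans (hD2D1 t).symm⟩

/-- If `μ₂` is a real zero of `χ_κ(z) = z² - cz - 1 + a e^{-zch}`, the operators `D₁`
and `D₂` commute and `Dy = D₁D₂y = D₂D₁y` for every `y ∈ C²(ℝ,ℝ)`. -/
theorem operators_factorize_commute
    (c h a μ₂ : ℝ) (hc : 0 ≤ c) (hh : 0 ≤ h)
    (hμ₂ : μ₂ ^ 2 - c * μ₂ - 1 + a * Real.exp (-(μ₂ * c * h)) = 0)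
    (y : ℝ → ℝ) (hy : ContDiff ℝ 2 y) :
    (∀ t : ℝ, D1op μ₂ (D2op c h a μ₂ y) t = Dop c h a y t) ∧
    (∀ t : ℝ, D2op c h a μ₂ (D1op μ₂ y) t = Dop c h a y t) ∧
    (∀ t : ℝ, D1op μ₂ (D2op c h a μ₂ y) t = D2op c h a μ₂ (D1op μ₂ y) t) :=
  operators_factorize_commute_general c h a μ₂ hμ₂ y hy
end
end

section
/- Let a > 0, h > 0, c > 0 and μ < 0 satisfy the system 1 − a h e^{−μch} = 0 and μ² − cμ − 1 − a e^{−cμh} = 0 (this is the system obtained by setting g'(κ) = −a in 1 + h g'(κ)e^{−μch} = 0, χ_κ(μ) = 0). Then μ = ln(ah)/(ch) = (c − √(c² + 4 + 4/h))/2, moreover ah < 1, 1 + h + ln(ah) > 0, and c = −ln(ah)/√(h(1 + h + ln(ah))). -/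
open Real

/-!
The first equation says `a h = e^{μ c h}`, i.e. `ln (a h) = μ c h < 0`. Substituting this into the
second one turns it into the quadratic `h μ² - h c μ - h - 1 = 0`, whose root below `c / 2` is the
stated formula for `μ`; multiplied by `c² h` the same quadratic reads
`c² h (1 + h + ln (a h)) = ln (a h)²`, which gives both the positivity and the formula for `c`.
-/

lemma eq_exp_of_one_sub_mul_exp_neg_eq_zero {x y : ℝ} (h : 1 - x * exp (-y) = 0) :
    x = exp y := by
  rw [exp_neg] at h
  field_simp at h
  linarith

lemma eq_sub_sqrt_div_two_of_sub_two_mul_sq_eq {b D μ : ℝ} (hμ : 2 * μ ≤ b)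
    (h : (b - 2 * μ) ^ 2 = D) : μ = (b - √D) / 2 := by
  rw [← h, sqrt_sq (by linarith)]
  ring

lemma eq_neg_div_sqrt_of_sq_mul_eq_sq {c L s : ℝ} (hc : 0 < c) (hL : L < 0)
    (h : c ^ 2 * s = L ^ 2) : c = -L / √s := by
  have hs : s = (-L / c) ^ 2 := by
    field_simp
    linear_combination h
  rw [hs, sqrt_sq (div_nonneg (by linarith) hc.le), div_div_cancel₀ (neg_ne_zero.mpr hL.ne)]

theorem boundary_curve_formulas_general
    (a h c μ : ℝ) (hh : 0 < h) (hc : 0 < c) (hμ : μ < 0)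
    (h1 : 1 - a * h * Real.exp (-(μ * c * h)) = 0)
    (h2 : μ ^ 2 - c * μ - 1 - a * Real.exp (-(c * μ * h)) = 0) :
    μ = Real.log (a * h) / (c * h) ∧
    μ = (c - Real.sqrt (c ^ 2 + 4 + 4 / h)) / 2 ∧
    a * h < 1 ∧
    0 < 1 + h + Real.log (a * h) ∧
    c = -Real.log (a * h) / Real.sqrt (h * (1 + h + Real.log (a * h))) := by
  have hah : a * h = exp (μ * c * h) := eq_exp_of_one_sub_mul_exp_neg_eq_zero h1
  have hL : μ * c * h < 0 := mul_neg_of_neg_of_pos (mul_neg_of_neg_of_pos hμ hc) hh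
  have hE : exp (-(c * μ * h)) = exp (-(μ * c * h)) := by ring_nf
  have hquad : h * μ ^ 2 - h * c * μ - h - 1 = 0 := by
    linear_combination h * h2 - h1 + a * h * hE
  have hsq : c ^ 2 * (h * (1 + h + μ * c * h)) = (μ * c * h) ^ 2 := by
    linear_combination (-(c ^ 2 * h)) * hquad
  have hpos : 0 < 1 + h + μ * c * h := by
    have := hsq ▸ sq_pos_of_neg hL
    exact pos_of_mul_pos_right (pos_of_mul_pos_right this (sq_nonneg c)) hh.le
  rw [show log (a * h) = μ * c * h by rw [hah, log_exp]]
  refine ⟨by field_simp, ?_, by rw [hah]; exact exp_lt_one_iff.mpr hL, hpos,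
    eq_neg_div_sqrt_of_sq_mul_eq_sq hc hL hsq⟩
  refine eq_sub_sqrt_div_two_of_sub_two_mul_sq_eq (by linarith) ?_
  field_simp
  linear_combination 4 * hquad

/-- Solving the system `1 - a h e^{-μch} = 0`, `μ² - cμ - 1 - a e^{-cμh} = 0`
(describing the curved part `Γ₁` of the boundary of the region `D_*`): the zero `μ` is
given explicitly, `ah < 1`, `1 + h + ln(ah) > 0`, and the speed `c` satisfies
`c = -ln(ah)/√(h(1 + h + ln(ah)))`. -/
theorem boundary_curve_formulas
    (a h c μ : ℝ) (ha : 0 < a) (hh : 0 < h) (hc : 0 < c) (hμ : μ < 0)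
    (h1 : 1 - a * h * Real.exp (-(μ * c * h)) = 0)
    (h2 : μ ^ 2 - c * μ - 1 - a * Real.exp (-(c * μ * h)) = 0) :
    μ = Real.log (a * h) / (c * h) ∧
    μ = (c - Real.sqrt (c ^ 2 + 4 + 4 / h)) / 2 ∧
    a * h < 1 ∧
    0 < 1 + h + Real.log (a * h) ∧
    c = -Real.log (a * h) / Real.sqrt (h * (1 + h + Real.log (a * h))) :=
  boundary_curve_formulas_general a h c μ hh hc hμ h1 h2
end

section
/- Let a > 0, let h_* > 0 be the unique positive solution of 1 = a h e^{h+1} (equivalently, of 1 + h + ln(ah) = 0), and set h^* = 1/a. Then the function c(h) = −ln(ah)/√(h(1 + h + ln(ah))), defined for h ∈ (h_*, h^*], is strictly decreasing, satisfies c(h) → +∞ as h → h_*⁺, and c(h^*) = 0. -/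
open Filter Set

/-- Properties of the boundary curve
`c(h) = -ln(ah)/√(h(1 + h + ln(ah)))`, `h ∈ (h_*, h^*]`, where `h_*` is the unique
positive solution of `1 = a h e^{h+1}` and `h^* = 1/a`: one has `1 + h_* + ln(a h_*) = 0`,
`c` is strictly decreasing on `(h_*, h^*]`, `c(h) → +∞` as `h → h_*⁺`, and `c(h^*) = 0`. -/
theorem boundary_curve_monotone
    (a : ℝ) (ha : 0 < a)
    (hstar : ℝ) (hstar_pos : 0 < hstar)
    (hstar_eq : 1 = a * hstar * Real.exp (hstar + 1))
    (hstar_unique : ∀ h : ℝ, 0 < h → 1 = a * h * Real.exp (h + 1) → h = hstar) :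
    1 + hstar + Real.log (a * hstar) = 0 ∧
    StrictAntiOn
      (fun h : ℝ => -Real.log (a * h) / Real.sqrt (h * (1 + h + Real.log (a * h))))
      (Ioc hstar (1 / a)) ∧
    Tendsto (fun h : ℝ => -Real.log (a * h) / Real.sqrt (h * (1 + h + Real.log (a * h))))
      (nhdsWithin hstar (Ioi hstar)) atTop ∧
    -Real.log (a * (1 / a)) / Real.sqrt ((1 / a) * (1 + 1 / a + Real.log (a * (1 / a)))) = 0 := by
  have ha' : a ≠ 0 := ha.ne'
  have hne : a * hstar ≠ 0 := by positivity
  have key : 1 + hstar + Real.log (a * hstar) = 0 := by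
    have h1 := congrArg Real.log hstar_eq
    rw [Real.log_one, Real.log_mul hne (Real.exp_ne_zero _), Real.log_exp] at h1
    linarith
  have phimono : ∀ u v : ℝ, 0 < u → u < v →
      1 + u + Real.log (a * u) < 1 + v + Real.log (a * v) := by
    intro u v hu huv
    have : Real.log (a * u) < Real.log (a * v) :=
      Real.log_lt_log (by positivity) (by nlinarith)
    linarith
  have phipos : ∀ h : ℝ, hstar < h → 0 < 1 + h + Real.log (a * h) := by
    intro h hh
    have := phimono hstar h hstar_pos hh
    linarith
  refine ⟨key, ?_, ?_, ?_⟩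
  · -- strict antitonicity
    intro x hx y hy hxy
    have hx0 : 0 < x := hstar_pos.trans hx.1
    have hy0 : 0 < y := hstar_pos.trans hy.1
    have hNy : 0 ≤ -Real.log (a * y) := by
      have : Real.log (a * y) ≤ 0 := by
        apply Real.log_nonpos (by positivity)
        have : a * y ≤ a * (1 / a) := by nlinarith [hy.2]
        rwa [mul_one_div_cancel ha'] at this
      linarith
    have hNxy : -Real.log (a * y) < -Real.log (a * x) := by
      have : Real.log (a * x) < Real.log (a * y) :=
        Real.log_lt_log (by positivity) (by nlinarith)
      linarith
    have hpx : 0 < x * (1 + x + Real.log (a * x)) :=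
      mul_pos hx0 (phipos x hx.1)
    have hD : Real.sqrt (x * (1 + x + Real.log (a * x)))
        < Real.sqrt (y * (1 + y + Real.log (a * y))) := by
      apply Real.sqrt_lt_sqrt hpx.le
      have h1 := phipos x hx.1
      have h2 := phimono x y hx0 hxy
      nlinarith
    have hDx : 0 < Real.sqrt (x * (1 + x + Real.log (a * x))) := Real.sqrt_pos.mpr hpx
    calc -Real.log (a * y) / Real.sqrt (y * (1 + y + Real.log (a * y)))
        ≤ -Real.log (a * y) / Real.sqrt (x * (1 + x + Real.log (a * x))) := by
          apply div_le_div_of_nonneg_left hNy hDx hD.le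
      _ < -Real.log (a * x) / Real.sqrt (x * (1 + x + Real.log (a * x))) :=
          (div_lt_div_iff_of_pos_right hDx).mpr hNxy
  · -- limit
    have hcontN : Tendsto (fun h : ℝ => -Real.log (a * h)) (nhdsWithin hstar (Ioi hstar))
        (nhds (1 + hstar)) := by
      have : ContinuousAt (fun h : ℝ => -Real.log (a * h)) hstar := by
        exact ((Real.continuousAt_log hne).comp (by fun_prop)).neg
      have h2 : Tendsto (fun h : ℝ => -Real.log (a * h)) (nhdsWithin hstar (Ioi hstar))
          (nhds (-Real.log (a * hstar))) := this.continuousWithinAt.tendsto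
      have heq : -Real.log (a * hstar) = 1 + hstar := by linarith
      rwa [heq] at h2
    have hcontD : Tendsto (fun h : ℝ => Real.sqrt (h * (1 + h + Real.log (a * h))))
        (nhdsWithin hstar (Ioi hstar)) (nhdsWithin 0 (Ioi 0)) := by
      rw [tendsto_nhdsWithin_iff]
      constructor
      · have hin : ContinuousAt (fun h : ℝ => h * (1 + h + Real.log (a * h))) hstar := by
          apply ContinuousAt.mul continuousAt_id
          exact ContinuousAt.add (by fun_prop) ((Real.continuousAt_log hne).comp (by fun_prop))
        have : ContinuousAt (fun h : ℝ => Real.sqrt (h * (1 + h + Real.log (a * h)))) hstar :=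
          Real.continuous_sqrt.continuousAt.comp hin
        have h2 : Tendsto (fun h : ℝ => Real.sqrt (h * (1 + h + Real.log (a * h))))
            (nhdsWithin hstar (Ioi hstar))
            (nhds (Real.sqrt (hstar * (1 + hstar + Real.log (a * hstar))))) :=
          this.continuousWithinAt.tendsto
        have hval : Real.sqrt (hstar * (1 + hstar + Real.log (a * hstar))) = 0 := by
          rw [key, mul_zero, Real.sqrt_zero]
        rwa [hval] at h2
      · filter_upwards [self_mem_nhdsWithin] with h hh
        exact Real.sqrt_pos.mpr (mul_pos (hstar_pos.trans hh) (phipos h hh))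
    have := hcontN.pos_mul_atTop (by linarith : (0:ℝ) < 1 + hstar) hcontD.inv_tendsto_nhdsGT_zero
    simpa [div_eq_mul_inv] using this
  · rw [mul_one_div_cancel ha', Real.log_one, neg_zero, zero_div]
end

section
/- Let k ∈ (1,3). The equation (c + √(c² − 4(k−1)))/2 = (√(c² + 8) − c)/2 has a solution c ≥ 2√(k−1) if and only if k ≤ 5/3; in that case the unique such solution is c_*(k) = (1+k)/√(2(3−k)), and one always has (1+k)/√(2(3−k)) ≥ 2√(k−1) for k ∈ (1,5/3]. -/
private lemma key_equiv (k c : ℝ) (hk1 : 1 < k) (hk3 : k < 3)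
    (hc : 2 * Real.sqrt (k - 1) ≤ c) :
    ((c + Real.sqrt (c ^ 2 - 4 * (k - 1))) / 2 = (Real.sqrt (c ^ 2 + 8) - c) / 2 ↔
      (c ^ 2 * (2 * (3 - k)) = (1 + k) ^ 2 ∧ c ^ 2 ≤ 1 + k)) := by
  have ha : 0 < Real.sqrt (k - 1) := Real.sqrt_pos.mpr (by linarith)
  have ha2 : Real.sqrt (k - 1) ^ 2 = k - 1 := Real.sq_sqrt (by linarith)
  have hc0 : 0 < c := lt_of_lt_of_le (by linarith) hc
  have hA : 0 ≤ c ^ 2 - 4 * (k - 1) := by nlinarith [ha.le, ha2]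
  set s := Real.sqrt (c ^ 2 - 4 * (k - 1)) with hs_def
  have hs2 : s ^ 2 = c ^ 2 - 4 * (k - 1) := Real.sq_sqrt hA
  have hs0 : 0 ≤ s := Real.sqrt_nonneg _
  constructor
  · intro h
    have hroot : Real.sqrt (c ^ 2 + 8) = 2 * c + s := by linarith
    have hsq : (2 * c + s) ^ 2 = c ^ 2 + 8 := by
      rw [← hroot]; exact Real.sq_sqrt (by positivity)
    have hcs : c * s = 1 + k - c ^ 2 := by linear_combination (hsq - hs2) / 4
    have hsqcs : (c * s) ^ 2 = (1 + k - c ^ 2) ^ 2 := by rw [hcs]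
    constructor
    · linear_combination hsqcs - c ^ 2 * hs2
    · nlinarith [mul_nonneg hc0.le hs0, hcs]
  · rintro ⟨h1, h2⟩
    have key2 : c ^ 2 - 4 * (k - 1) = ((1 + k - c ^ 2) / c) ^ 2 := by
      field_simp
      nlinarith [h1]
    have hs_eq : s = (1 + k - c ^ 2) / c := by
      rw [hs_def, key2, Real.sqrt_sq (div_nonneg (by linarith) hc0.le)]
    have hcs : c * s = 1 + k - c ^ 2 := by
      rw [hs_eq]; field_simp
    have hsq : (2 * c + s) ^ 2 = c ^ 2 + 8 := by linear_combination hs2 + 4 * hcs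
    have hroot : Real.sqrt (c ^ 2 + 8) = 2 * c + s := by
      rw [← hsq, Real.sqrt_sq (by positivity)]
    linarith

/-- For the non-delayed toy model with `k ∈ (1,3)`: the compatibility equation
`(c + √(c² - 4(k-1)))/2 = (√(c²+8) - c)/2` has a solution `c ≥ 2√(k-1)` iff `k ≤ 5/3`;
in that case the unique such solution is `c_* = (1+k)/√(2(3-k))`; and one always has
`(1+k)/√(2(3-k)) ≥ 2√(k-1)` for `k ≤ 5/3`. -/
theorem pushed_speed_nondelayed (k : ℝ) (hk1 : 1 < k) (hk3 : k < 3) :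
    ((∃ c : ℝ, 2 * Real.sqrt (k - 1) ≤ c ∧
        (c + Real.sqrt (c ^ 2 - 4 * (k - 1))) / 2 = (Real.sqrt (c ^ 2 + 8) - c) / 2) ↔
      k ≤ 5 / 3) ∧
    (k ≤ 5 / 3 →
      ∀ c : ℝ, 2 * Real.sqrt (k - 1) ≤ c →
        ((c + Real.sqrt (c ^ 2 - 4 * (k - 1))) / 2 = (Real.sqrt (c ^ 2 + 8) - c) / 2 ↔
          c = (1 + k) / Real.sqrt (2 * (3 - k)))) ∧
    (k ≤ 5 / 3 → 2 * Real.sqrt (k - 1) ≤ (1 + k) / Real.sqrt (2 * (3 - k))) := by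
  have ha : 0 < Real.sqrt (k - 1) := Real.sqrt_pos.mpr (by linarith)
  have ha2 : Real.sqrt (k - 1) ^ 2 = k - 1 := Real.sq_sqrt (by linarith)
  have hb : 0 < Real.sqrt (2 * (3 - k)) := Real.sqrt_pos.mpr (by linarith)
  have hb2 : Real.sqrt (2 * (3 - k)) ^ 2 = 2 * (3 - k) := Real.sq_sqrt (by linarith)
  set cstar := (1 + k) / Real.sqrt (2 * (3 - k)) with hcstar_def
  have hcstar0 : 0 < cstar := div_pos (by linarith) hb
  have hne : (2 * (3 - k)) ≠ 0 := ne_of_gt (by linarith)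
  have hcstar_sq : cstar ^ 2 * (2 * (3 - k)) = (1 + k) ^ 2 := by
    rw [hcstar_def, div_pow, hb2, div_mul_cancel₀ _ hne]
  -- part 3 : cstar ≥ 2√(k-1)  (holds for all k ∈ (1,3))
  have h3 : 2 * Real.sqrt (k - 1) ≤ cstar := by
    rw [hcstar_def, le_div_iff₀ hb]
    have hab : (Real.sqrt (k - 1) * Real.sqrt (2 * (3 - k))) ^ 2
        = (k - 1) * (2 * (3 - k)) := by rw [mul_pow, ha2, hb2]
    nlinarith [hab, sq_nonneg (3 * k - 5), mul_nonneg ha.le hb.le]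
  -- cstar² ≤ 1 + k when k ≤ 5/3
  have hle : k ≤ 5 / 3 → cstar ^ 2 ≤ 1 + k := by
    intro h53
    nlinarith [hcstar_sq, sq_nonneg cstar]
  refine ⟨?_, ?_, fun _ => h3⟩
  · constructor
    · rintro ⟨c, hcge, heq⟩
      obtain ⟨h1, h2⟩ := (key_equiv k c hk1 hk3 hcge).mp heq
      nlinarith [h1, h2, sq_nonneg c]
    · intro h53
      exact ⟨cstar, h3, (key_equiv k cstar hk1 hk3 h3).mpr ⟨hcstar_sq, hle h53⟩⟩
  · intro h53 c hcge
    rw [key_equiv k c hk1 hk3 hcge]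
    have hc0 : 0 < c := lt_of_lt_of_le (by linarith) hcge
    constructor
    · rintro ⟨h1, h2⟩
      have hsq : c ^ 2 = cstar ^ 2 := mul_right_cancel₀ hne (h1.trans hcstar_sq.symm)
      have hz : (c - cstar) * (c + cstar) = 0 := by linear_combination hsq
      rcases mul_eq_zero.mp hz with h | h
      · linarith
      · linarith
    · intro h
      rw [h]
      exact ⟨hcstar_sq, hle h53⟩
end

section
/- For every c > 0 and h ≥ 0, the function χ_κ(z) = z² − cz − 1 − e^{−zch} of the complex variable z has exactly one zero μ₁ with positive real part, this zero is real and positive, and every other complex zero ζ of χ_κ satisfies Re ζ < 0. -/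
noncomputable section

/-- The characteristic function `χ_κ(z) = z² - cz - 1 - e^{-zch}` at the positive
equilibrium `κ = 2` of the toy model, as a function of the complex variable `z`. -/
def chiK2 (c h : ℝ) (z : ℂ) : ℂ :=
  z ^ 2 - (c : ℂ) * z - 1 - Complex.exp (-(z * c * h))

/-- No zero with nonnegative real part and positive imaginary part. -/
lemma chiK2_no_upper (c τ x y : ℝ) (hc : 0 < c) (hτ : 0 ≤ τ) (hx : 0 ≤ x) (hy : 0 < y)
    (hre : x * x - y * y - c * x - 1 - Real.exp (-(x * τ)) * Real.cos (y * τ) = 0)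
    (him : x * y + y * x - c * y + Real.exp (-(x * τ)) * Real.sin (y * τ) = 0) : False := by
  set E := Real.exp (-(x * τ)) with hE
  have hE0 : 0 < E := Real.exp_pos _
  have hE1 : E ≤ 1 := Real.exp_le_one_iff.mpr (neg_nonpos.mpr (mul_nonneg hx hτ))
  have hcos1 : Real.cos (y * τ) ≤ 1 := Real.cos_le_one _
  have hcos2 : -1 ≤ Real.cos (y * τ) := Real.neg_one_le_cos _
  -- y² ≤ x² - cx, hence x > c
  have hy2 : y * y ≤ x * x - c * x := by nlinarith
  have hx0 : 0 < x := by nlinarith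
  have hxc : c < x := by nlinarith
  rcases eq_or_lt_of_le hτ with hτ0 | hτ0
  · -- τ = 0 : sin term vanishes, Im equation impossible
    rw [← hτ0] at him
    simp at him
    nlinarith
  · -- τ > 0
    have hθ : 0 < y * τ := mul_pos hy hτ0
    have hsin : -(y * τ) ≤ Real.sin (y * τ) := by
      have := Real.abs_sin_le_abs (x := y * τ)
      rw [abs_of_pos hθ] at this
      cases abs_le.mp this with
      | intro a b => linarith
    -- from Im equation: x < E * τ
    have hxEτ : x < E * τ := by
      have h1 : y * (2 * x - c) ≤ E * (y * τ) := by nlinarith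
      nlinarith
    -- from Re equation: E > 1 - x²
    have hEgt : 1 - x * x < E := by nlinarith
    -- contradiction with e^s ≥ 1 + s, s = xτ
    have hs : x * τ + 1 ≤ Real.exp (x * τ) := Real.add_one_le_exp _
    have hprod : E * Real.exp (x * τ) = 1 := by
      rw [hE, ← Real.exp_add]; simp
    have hx2 : x * x < (x * τ) * E := by nlinarith
    nlinarith [Real.exp_pos (x * τ)]

/-- The real characteristic function. -/
def chiR (c τ x : ℝ) : ℝ := x ^ 2 - c * x - 1 - Real.exp (-(x * τ))

lemma chiR_root_gt (c τ x : ℝ) (hc : 0 < c) (hx : 0 ≤ x) (hroot : chiR c τ x = 0) :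
    c < x := by
  have h1 : x ^ 2 - c * x = 1 + Real.exp (-(x * τ)) := by
    unfold chiR at hroot; linarith
  have h2 : 0 < Real.exp (-(x * τ)) := Real.exp_pos _
  have hx0 : 0 < x := by nlinarith
  nlinarith

lemma chiR_exists (c τ : ℝ) (hc : 0 < c) (hτ : 0 ≤ τ) :
    ∃ μ : ℝ, c < μ ∧ chiR c τ μ = 0 := by
  have hcont : ContinuousOn (chiR c τ) (Set.Icc 0 (c + 2)) := by
    unfold chiR; fun_prop
  have hle : (0 : ℝ) ≤ c + 2 := by linarith
  have hmem : (0 : ℝ) ∈ Set.Icc (chiR c τ 0) (chiR c τ (c + 2)) := by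
    constructor
    · unfold chiR; simp
    · unfold chiR
      have : Real.exp (-((c + 2) * τ)) ≤ 1 :=
        Real.exp_le_one_iff.mpr (neg_nonpos.mpr (by positivity))
      nlinarith
  obtain ⟨μ, hμmem, hμ⟩ := intermediate_value_Icc hle hcont hmem
  exact ⟨μ, chiR_root_gt c τ μ hc hμmem.1 hμ, hμ⟩

lemma chiR_unique (c τ x μ : ℝ) (hc : 0 < c) (hτ : 0 ≤ τ) (hx : 0 ≤ x)
    (hxr : chiR c τ x = 0) (hμr : chiR c τ μ = 0) (hμc : c < μ) : x = μ := by
  have hxc : c < x := chiR_root_gt c τ x hc hx hxr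
  unfold chiR at hxr hμr
  rcases lt_trichotomy x μ with h | h | h
  · exfalso
    have hexp : Real.exp (-(μ * τ)) ≤ Real.exp (-(x * τ)) :=
      Real.exp_le_exp.mpr (by nlinarith)
    nlinarith
  · exact h
  · exfalso
    have hexp : Real.exp (-(x * τ)) ≤ Real.exp (-(μ * τ)) :=
      Real.exp_le_exp.mpr (by nlinarith)
    nlinarith

/-- For every `c > 0` and `h ≥ 0`, `χ_κ` has exactly one zero `μ₁` with positive real
part; this zero is real and positive, and every other complex zero has negative real
part. -/
theorem toy_characteristic_at_two (c h : ℝ) (hc : 0 < c) (hh : 0 ≤ h) :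
    ∃ μ₁ : ℝ, 0 < μ₁ ∧ chiK2 c h (μ₁ : ℂ) = 0 ∧
      ∀ z : ℂ, chiK2 c h z = 0 → z ≠ (μ₁ : ℂ) → z.re < 0 := by
  have hτ : 0 ≤ c * h := mul_nonneg hc.le hh
  obtain ⟨μ, hμc, hμroot⟩ := chiR_exists c (c * h) hc hτ
  have hμ0 : 0 < μ := lt_trans hc hμc
  refine ⟨μ, hμ0, ?_, ?_⟩
  · -- μ is a zero of chiK2
    have hcast : -((μ : ℂ) * c * h) = ((-(μ * (c * h)) : ℝ) : ℂ) := by push_cast; ring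
    unfold chiK2
    rw [hcast, ← Complex.ofReal_exp]
    have := hμroot
    unfold chiR at this
    have h2 : ((μ ^ 2 - c * μ - 1 - Real.exp (-(μ * (c * h))) : ℝ) : ℂ) = 0 := by
      rw [this]; simp
    push_cast at h2 ⊢
    linear_combination h2
  · intro z hz hzne
    by_contra hcon
    push_neg at hcon
    have hRe := congrArg Complex.re hz
    have hIm := congrArg Complex.im hz
    simp [chiK2, Complex.exp_re, Complex.exp_im, Complex.add_re, Complex.add_im,
      Complex.sub_re, Complex.sub_im, Complex.mul_re, Complex.mul_im, pow_two] at hRe hIm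
    rw [mul_assoc z.re c h, mul_assoc z.im c h] at hRe hIm
    rcases lt_trichotomy z.im 0 with hy | hy | hy
    · -- apply the lemma with y = -z.im
      apply chiK2_no_upper c (c * h) z.re (-z.im) hc hτ hcon (by linarith)
      · have h1 : (-z.im) * (c * h) = -(z.im * (c * h)) := by ring
        rw [h1, Real.cos_neg]
        linear_combination hRe
      · have h1 : (-z.im) * (c * h) = -(z.im * (c * h)) := by ring
        rw [h1, Real.sin_neg]
        linear_combination -hIm
    · -- z is real, hence z = μ, contradiction
      have hreal : chiR c (c * h) z.re = 0 := by
        unfold chiR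
        rw [hy] at hRe
        simp at hRe
        linear_combination hRe
      have : z.re = μ := chiR_unique c (c * h) z.re μ hc hτ hcon hreal hμroot hμc
      exact hzne (Complex.ext this hy)
    · exact chiK2_no_upper c (c * h) z.re z.im hc hτ hcon hy
        (by linear_combination hRe) (by linear_combination hIm)
end
end
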